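/- arXiv:2305.05851 — 2 statements merged into one kernel-verified Lean document; each statement's English description precedes it below -/
import Mathlib

section
/- Let K = ℚ(√2) (the intermediate field ℚ⟮√2⟯ of ℝ/ℚ), let b₀ = 8 − 6√2 and c₀ = 2 − 2√2, and let W be the Tate normal form E(b₀,c₀): y² + (1−c₀)xy − b₀y = x³ − b₀x² over K. Then (0,0) is an affine point of W and it has exact order 11 in the group of K-rational points of W. -/
open scoped IntermediateField

/-!
Let `c² = 4c + 4` in a field of characteristic `≠ 2` and `b = 2 + 3c`. On the Tate normal form
`E(b, c)` the point `P = (0, 0)` has `2P = (b, bc)` and `3P = (c, b - c)`, as on every Tate normal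
form. The relation on `c` gives `5P = 2P + 3P = (2 + c, 4c)` and `6P = 3P + 3P = (2 + c, 4 + 4c)`,
which are opposite points, so `11P = 0` and `P` has order `11`. Over `ℚ(√2)`,
`c₀ = 2 - 2√2` satisfies `c₀² = 4c₀ + 4` and `b₀ = 2 + 3c₀`.
-/

namespace WeierstrassCurve.Affine.Point

variable {F : Type*} [Field F] [DecidableEq F] {W : Affine F} {x₁ y₁ x₂ y₂ x₃ y₃ ℓ : F}

lemma exists_some_add_some_eq_of_X_ne (h₁ : W.Nonsingular x₁ y₁) (h₂ : W.Nonsingular x₂ y₂)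
    (hx : x₁ ≠ x₂) (hℓ : y₁ - y₂ = ℓ * (x₁ - x₂)) (hx₃ : W.addX x₁ x₂ ℓ = x₃)
    (hy₃ : W.addY x₁ x₂ y₁ ℓ = y₃) :
    ∃ h₃ : W.Nonsingular x₃ y₃, some _ _ h₁ + some _ _ h₂ = some _ _ h₃ := by
  have hslope : W.slope x₁ x₂ y₁ y₂ = ℓ := by
    rw [slope_of_X_ne hx, div_eq_iff (sub_ne_zero.mpr hx), hℓ]
  subst hx₃ hy₃ hslope
  exact ⟨_, add_of_X_ne hx⟩

lemma exists_some_add_self_eq_of_Y_ne (h₁ : W.Nonsingular x₁ y₁) (hy : y₁ ≠ W.negY x₁ y₁)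
    (hℓ : 3 * x₁ ^ 2 + 2 * W.a₂ * x₁ + W.a₄ - W.a₁ * y₁ = ℓ * (y₁ - W.negY x₁ y₁))
    (hx₃ : W.addX x₁ x₁ ℓ = x₃) (hy₃ : W.addY x₁ x₁ y₁ ℓ = y₃) :
    ∃ h₃ : W.Nonsingular x₃ y₃, some _ _ h₁ + some _ _ h₁ = some _ _ h₃ := by
  have hslope : W.slope x₁ x₁ y₁ y₁ = ℓ := by
    rw [slope_of_Y_ne rfl hy, div_eq_iff (sub_ne_zero.mpr hy), hℓ]
  subst hx₃ hy₃ hslope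
  exact ⟨_, add_self_of_Y_ne hy⟩

end WeierstrassCurve.Affine.Point

open WeierstrassCurve.Affine

variable {F : Type*} [Field F]

lemma add_one_ne_zero_of_sq_eq_four_mul_add_four {c : F} (hc : c ^ 2 = 4 * c + 4) :
    c + 1 ≠ 0 := by
  intro h
  exact one_ne_zero (by linear_combination (5 - c) * h + hc : (1 : F) = 0)

lemma two_add_three_mul_ne_zero_of_sq_eq_four_mul_add_four {c : F} (hc : c ^ 2 = 4 * c + 4)
    (h2 : (2 : F) ≠ 0) :
    2 + 3 * c ≠ 0 := by
  intro h
  have : (2 : F) ^ 3 = 0 := by linear_combination (3 * c - 14) * h - 9 * hc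
  exact h2 (pow_eq_zero_iff three_ne_zero |>.mp this)

def tateNormalForm (b c : F) : WeierstrassCurve.Affine F :=
  { a₁ := 1 - c, a₂ := -b, a₃ := -b, a₄ := 0, a₆ := 0 }

namespace tateNormalForm

variable {b c : F}

lemma nonsingular_zero_zero_iff : (tateNormalForm b c).Nonsingular 0 0 ↔ b ≠ 0 := by
  simp [nonsingular_zero, tateNormalForm]

variable [DecidableEq F]

lemma exists_two_nsmul_eq (h₀ : (tateNormalForm b c).Nonsingular 0 0) :
    ∃ h : (tateNormalForm b c).Nonsingular b (b * c),
      2 • Point.some _ _ h₀ = Point.some _ _ h := by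
  have hb : b ≠ 0 := nonsingular_zero_zero_iff.mp h₀
  rw [two_nsmul]
  refine Point.exists_some_add_self_eq_of_Y_ne h₀ (ℓ := 0) ?_ ?_ ?_ ?_ <;>
    simp only [negY, addX, addY, negAddY, tateNormalForm]
  · simpa using hb.symm
  · ring
  · ring
  · ring

lemma exists_three_nsmul_eq (h₀ : (tateNormalForm b c).Nonsingular 0 0) :
    ∃ h : (tateNormalForm b c).Nonsingular c (b - c),
      3 • Point.some _ _ h₀ = Point.some _ _ h := by
  obtain ⟨h₂, e₂⟩ := exists_two_nsmul_eq h₀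
  rw [succ_nsmul, e₂]
  exact Point.exists_some_add_some_eq_of_X_ne h₂ h₀ (nonsingular_zero_zero_iff.mp h₀) (ℓ := c)
    (by ring) (by simp only [addX, tateNormalForm]; ring)
    (by simp only [addY, negY, negAddY, addX, tateNormalForm]; ring)

lemma exists_five_nsmul_eq (hc : c ^ 2 = 4 * c + 4) (h2 : (2 : F) ≠ 0)
    (h₀ : (tateNormalForm (2 + 3 * c) c).Nonsingular 0 0) :
    ∃ h : (tateNormalForm (2 + 3 * c) c).Nonsingular (2 + c) (4 * c),
      5 • Point.some _ _ h₀ = Point.some _ _ h := by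
  obtain ⟨h₂, e₂⟩ := exists_two_nsmul_eq h₀
  obtain ⟨h₃, e₃⟩ := exists_three_nsmul_eq h₀
  have hx : 2 + 3 * c ≠ c := fun h ↦
    mul_ne_zero h2 (add_one_ne_zero_of_sq_eq_four_mul_add_four hc) (by linear_combination h)
  rw [show 5 = 2 + 3 from rfl, add_nsmul, e₂, e₃]
  exact Point.exists_some_add_some_eq_of_X_ne h₂ h₃ hx (ℓ := 1 + c)
    (by linear_combination hc) (by simp only [addX, tateNormalForm]; ring)
    (by simp only [addY, negY, negAddY, addX, tateNormalForm]; ring)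

lemma exists_six_nsmul_eq (hc : c ^ 2 = 4 * c + 4) (h2 : (2 : F) ≠ 0)
    (h₀ : (tateNormalForm (2 + 3 * c) c).Nonsingular 0 0) :
    ∃ h : (tateNormalForm (2 + 3 * c) c).Nonsingular (2 + c) (4 + 4 * c),
      6 • Point.some _ _ h₀ = Point.some _ _ h := by
  obtain ⟨h₃, e₃⟩ := exists_three_nsmul_eq h₀
  have hy : 2 + 3 * c - c ≠ (tateNormalForm (2 + 3 * c) c).negY c (2 + 3 * c - c) := fun h ↦
    mul_ne_zero h2 (add_one_ne_zero_of_sq_eq_four_mul_add_four hc) <| by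
      simp only [negY, tateNormalForm] at h
      linear_combination -h - hc
  rw [show 6 = 3 + 3 from rfl, add_nsmul, e₃]
  exact Point.exists_some_add_self_eq_of_Y_ne h₃ hy (ℓ := c - 1)
    (by simp only [negY, tateNormalForm]; linear_combination c * hc)
    (by simp only [addX, tateNormalForm]; ring)
    (by simp only [addY, negY, negAddY, addX, tateNormalForm]; linear_combination hc)

lemma eleven_nsmul_eq_zero (hc : c ^ 2 = 4 * c + 4) (h2 : (2 : F) ≠ 0)
    (h₀ : (tateNormalForm (2 + 3 * c) c).Nonsingular 0 0) :
    11 • Point.some _ _ h₀ = 0 := by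
  obtain ⟨h₅, e₅⟩ := exists_five_nsmul_eq hc h2 h₀
  obtain ⟨h₆, e₆⟩ := exists_six_nsmul_eq hc h2 h₀
  rw [show 11 = 5 + 6 from rfl, add_nsmul, e₅, e₆]
  exact Point.add_of_Y_eq rfl (by simp only [negY, tateNormalForm]; linear_combination -hc)

theorem exists_addOrderOf_eq_eleven (hc : c ^ 2 = 4 * c + 4) (h2 : (2 : F) ≠ 0) :
    ∃ h : (tateNormalForm (2 + 3 * c) c).Nonsingular 0 0, addOrderOf (Point.some _ _ h) = 11 := by
  have h₀ := (nonsingular_zero_zero_iff (c := c)).mpr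
    (two_add_three_mul_ne_zero_of_sq_eq_four_mul_add_four hc h2)
  have : Fact (Nat.Prime 11) := ⟨by norm_num⟩
  exact ⟨h₀, addOrderOf_eq_prime (eleven_nsmul_eq_zero hc h2 h₀) (Point.some_ne_zero h₀)⟩

end tateNormalForm

theorem tate_normal_form_order_eleven_general
    (K : IntermediateField ℚ ℝ)
    (b₀ c₀ : K)
    (hb₀ : (b₀ : ℝ) = 8 - 6 * Real.sqrt 2) (hc₀ : (c₀ : ℝ) = 2 - 2 * Real.sqrt 2)
    (W : WeierstrassCurve.Affine K)
    (hW : W = { a₁ := 1 - c₀, a₂ := -b₀, a₃ := -b₀, a₄ := 0, a₆ := 0 }) :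
    ∃ h : W.Nonsingular 0 0,
      addOrderOf (WeierstrassCurve.Affine.Point.some _ _ h) = 11 := by
  have hsqrt : Real.sqrt 2 ^ 2 = 2 := Real.sq_sqrt zero_le_two
  have hc : c₀ ^ 2 = 4 * c₀ + 4 := by
    apply (algebraMap K ℝ).injective
    simp only [map_add, map_mul, map_pow, map_ofNat, IntermediateField.algebraMap_apply, hc₀]
    linear_combination 4 * hsqrt
  have hb : b₀ = 2 + 3 * c₀ := by
    apply (algebraMap K ℝ).injective
    simp only [map_add, map_mul, map_ofNat, IntermediateField.algebraMap_apply, hb₀, hc₀]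
    ring
  subst hW hb
  exact tateNormalForm.exists_addOrderOf_eq_eleven hc two_ne_zero

/-- Let `K = ℚ(√2)`, `b₀ = 8 - 6√2`, `c₀ = 2 - 2√2`, and let `W` be the
Tate normal form `E(b₀,c₀)` over `K`. Then `(0,0)` is an affine point of `W` of exact
order `11` in the group of `K`-rational points. -/
theorem tate_normal_form_order_eleven
    (K : IntermediateField ℚ ℝ) (hK : K = ℚ⟮Real.sqrt 2⟯)
    (b₀ c₀ : K)
    (hb₀ : (b₀ : ℝ) = 8 - 6 * Real.sqrt 2) (hc₀ : (c₀ : ℝ) = 2 - 2 * Real.sqrt 2)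
    (W : WeierstrassCurve.Affine K)
    (hW : W = { a₁ := 1 - c₀, a₂ := -b₀, a₃ := -b₀, a₄ := 0, a₆ := 0 }) :
    ∃ h : W.Nonsingular 0 0,
      addOrderOf (WeierstrassCurve.Affine.Point.some _ _ h) = 11 :=
  tate_normal_form_order_eleven_general K b₀ c₀ hb₀ hc₀ W hW
end

section
/- Let β ∈ ℂ be a root of 8x⁴ + 14x³ − 11x² − 11x − 2 and let K = ℚ(β). Set b₂ = −(6901/1024)β³ − (41387/4096)β² + (91011/8192)β + 39449/8192 and c₂ = −(139/16)β³ − (725/64)β² + (2301/128)β + 871/128, and let W be the Tate normal form E(b₂,c₂): y² + (1−c₂)xy − b₂y = x³ − b₂x² over K. Then (0,0) is an affine point of W and has exact order 17 in the group of K-rational points of W. -/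
/-!
In any Tate normal form `E(b, c)` with `b ≠ 0` the point `P = (0, 0)` is nonsingular, with
`-P = (0, b)` and `2P = (b, bc)`. For the given `b₂, c₂ ∈ ℚ(β)`, three further tangent doublings,
computed modulo the minimal polynomial of `β`, give `4P`, `8P` and `16P = (0, b₂) = -P`.
Hence `17P = 0`, and since `17` is prime and `P ≠ 0`, `P` has order exactly `17`.
-/

open scoped IntermediateField

theorem addOrderOf_eq_of_nsmul_eq_neg {G : Type*} [AddGroup G] {x : G} {n : ℕ}
    (h : n • x = -x) (hn : (n + 1).Prime) (hx : x ≠ 0) : addOrderOf x = n + 1 :=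
  haveI := Fact.mk hn
  addOrderOf_eq_prime (by rw [succ_nsmul, h, neg_add_cancel]) hx

namespace WeierstrassCurve.Affine

variable {F : Type*} [Field F]

lemma two_nsmul_some_eq_some_of_tangent [DecidableEq F] {W : Affine F} {x y ℓ x' y' : F}
    (h : W.Nonsingular x y) (hy : y ≠ W.negY x y)
    (hℓ : ℓ * (y - W.negY x y) = 3 * x ^ 2 + 2 * W.a₂ * x + W.a₄ - W.a₁ * y)
    (hx' : W.addX x x ℓ = x') (hy' : W.addY x x y ℓ = y') :
    ∃ h' : W.Nonsingular x' y', 2 • Point.some _ _ h = Point.some _ _ h' := by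
  have hslope : W.slope x x y y = ℓ := by
    rw [slope_of_Y_ne rfl hy, div_eq_iff (sub_ne_zero.mpr hy), hℓ]
  subst hx' hy'
  exact ⟨hslope ▸ nonsingular_add h h fun hxy ↦ hy hxy.2, by
    rw [two_nsmul, Point.add_self_of_Y_ne hy]; simp only [hslope]⟩

@[simps]
def tateNormalForm (b c : F) : Affine F :=
  { a₁ := 1 - c, a₂ := -b, a₃ := -b, a₄ := 0, a₆ := 0 }

variable {b c : F}

@[simp]
lemma tateNormalForm_negY_zero_zero : (tateNormalForm b c).negY 0 0 = b := by
  simp [tateNormalForm]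

lemma tateNormalForm_nonsingular_zero_zero (hb : b ≠ 0) : (tateNormalForm b c).Nonsingular 0 0 :=
  nonsingular_zero.mpr ⟨rfl, .inl (neg_ne_zero.mpr hb)⟩

lemma tateNormalForm_two_nsmul_some_zero_zero [DecidableEq F] (hb : b ≠ 0) :
    ∃ h : (tateNormalForm b c).Nonsingular b (b * c),
      2 • Point.some _ _ (tateNormalForm_nonsingular_zero_zero hb) = Point.some _ _ h :=
  two_nsmul_some_eq_some_of_tangent _ (by simpa using hb.symm) (ℓ := 0) (by simp) (by simp)
    (by simp [addY]; ring)

lemma tateNormalForm_two_nsmul_some [DecidableEq F] {x y x' y' : F} (ℓ : F)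
    (h : (tateNormalForm b c).Nonsingular x y) (hd : 2 * y + (1 - c) * x - b ≠ 0)
    (hℓ : ℓ * (2 * y + (1 - c) * x - b) = 3 * x ^ 2 - 2 * b * x - (1 - c) * y)
    (hx' : ℓ ^ 2 + (1 - c) * ℓ + b - 2 * x = x')
    (hy' : -(ℓ * (x' - x) + y) - (1 - c) * x' + b = y') :
    ∃ h' : (tateNormalForm b c).Nonsingular x' y', 2 • Point.some _ _ h = Point.some _ _ h' := by
  have hd' : y - (tateNormalForm b c).negY x y = 2 * y + (1 - c) * x - b := by
    simp only [negY, tateNormalForm_a₁, tateNormalForm_a₃]; ring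
  have hX : (tateNormalForm b c).addX x x ℓ = x' := by
    simp only [addX, tateNormalForm_a₁, tateNormalForm_a₂]; linear_combination hx'
  refine two_nsmul_some_eq_some_of_tangent h (sub_ne_zero.mp (hd' ▸ hd)) ?_ hX ?_
  · rw [hd', hℓ]; simp only [tateNormalForm_a₁, tateNormalForm_a₂, tateNormalForm_a₄]; ring
  · simp only [addY, negAddY, hX, negY, tateNormalForm_a₁, tateNormalForm_a₃]
    linear_combination hy'

/- Each `u` below is the inverse modulo `ht` of the denominator of the tangent slope, so the
tangent is not vertical; `grind` verifies the identities modulo `ht`. -/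
theorem tateNormalForm_addOrderOf_eq_seventeen [CharZero F] [DecidableEq F] {t : F}
    (ht : 8 * t ^ 4 + 14 * t ^ 3 - 11 * t ^ 2 - 11 * t - 2 = 0)
    (hb : b = 39449 / 8192 + 91011 / 8192 * t - 41387 / 4096 * t ^ 2 - 6901 / 1024 * t ^ 3)
    (hc : c = 871 / 128 + 2301 / 128 * t - 725 / 64 * t ^ 2 - 139 / 16 * t ^ 3) :
    ∃ h : (tateNormalForm b c).Nonsingular 0 0, addOrderOf (Point.some _ _ h) = 17 := by
  have hb₀ : b ≠ 0 := left_ne_zero_of_mul_eq_one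
    (b := 133 / 8 + 701 / 16 * t - 239 / 8 * t ^ 2 - 53 / 2 * t ^ 3) (by grind)
  obtain ⟨h₂, e₂⟩ := tateNormalForm_two_nsmul_some_zero_zero (c := c) hb₀
  obtain ⟨h₄, e₄⟩ := tateNormalForm_two_nsmul_some
    (1313 / 128 + 3419 / 128 * t - 1219 / 64 * t ^ 2 - 221 / 16 * t ^ 3) h₂
    (left_ne_zero_of_mul_eq_one
      (b := 401 / 128 + 969 / 256 * t + 261 / 128 * t ^ 2 - 265 / 32 * t ^ 3) (by grind))
    (x' := 9891 / 4096 + 24785 / 4096 * t - 7945 / 2048 * t ^ 2 - 1495 / 512 * t ^ 3)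
    (y' := 1437357 / 524288 + 3437727 / 524288 * t - 941799 / 262144 * t ^ 2
      - 187961 / 65536 * t ^ 3)
    (by grind) (by grind) (by grind)
  obtain ⟨h₈, e₈⟩ := tateNormalForm_two_nsmul_some
    (-263 / 128 - 349 / 128 * t + 309 / 64 * t ^ 2 + 43 / 16 * t ^ 3) h₄
    (left_ne_zero_of_mul_eq_one
      (b := 927 / 32 + 4753 / 64 * t - 3689 / 64 * t ^ 2 - 609 / 16 * t ^ 3) (by grind))
    (x' := 4979 / 1024 + 12481 / 1024 * t - 4985 / 512 * t ^ 2 - 871 / 128 * t ^ 3)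
    (y' := -329407 / 131072 - 985157 / 131072 * t + 360925 / 65536 * t ^ 2
      + 65667 / 16384 * t ^ 3)
    (by grind) (by grind) (by grind)
  obtain ⟨h₁₆, e₁₆⟩ := tateNormalForm_two_nsmul_some
    (785 / 128 + 2091 / 128 * t - 787 / 64 * t ^ 2 - 141 / 16 * t ^ 3) h₈
    (left_ne_zero_of_mul_eq_one
      (b := -107 / 4 - 485 / 8 * t + 409 / 8 * t ^ 2 + 121 / 4 * t ^ 3) (by grind))
    (x' := 0) (y' := b) (by grind) (by grind) (by grind)
  set P := Point.some _ _ (tateNormalForm_nonsingular_zero_zero (c := c) hb₀)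
  have h16 : (16 : ℕ) • P = -P := calc
    (16 : ℕ) • P = 2 • 2 • 2 • 2 • P := by simp only [smul_smul]; norm_num
    _ = Point.some _ _ h₁₆ := by rw [e₂, e₄, e₈, e₁₆]
    _ = -P := by simp only [P, Point.neg_some, tateNormalForm_negY_zero_zero]
  exact ⟨_, addOrderOf_eq_of_nsmul_eq_neg h16 (by norm_num) (Point.some_ne_zero _)⟩

end WeierstrassCurve.Affine

open WeierstrassCurve.Affine in
/-- Let `β ∈ ℂ` be a root of `8x⁴ + 14x³ - 11x² - 11x - 2` and `K = ℚ(β)`.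
With `b₂ = -(6901/1024)β³ - (41387/4096)β² + (91011/8192)β + 39449/8192` and
`c₂ = -(139/16)β³ - (725/64)β² + (2301/128)β + 871/128`, let `W` be the Tate normal form
`E(b₂,c₂)` over `K`. Then `(0,0)` is an affine point of `W` of exact order `17` in the
group of `K`-rational points. -/
theorem tate_normal_form_order_seventeen_beta
    (β : ℂ) (hβ : 8 * β ^ 4 + 14 * β ^ 3 - 11 * β ^ 2 - 11 * β - 2 = 0)
    (K : IntermediateField ℚ ℂ) (hK : K = ℚ⟮β⟯)
    (b₂ c₂ : K)
    (hb₂ : (b₂ : ℂ) = -(6901 / 1024) * β ^ 3 - (41387 / 4096) * β ^ 2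
      + (91011 / 8192) * β + 39449 / 8192)
    (hc₂ : (c₂ : ℂ) = -(139 / 16) * β ^ 3 - (725 / 64) * β ^ 2
      + (2301 / 128) * β + 871 / 128)
    (W : WeierstrassCurve.Affine K)
    (hW : W = { a₁ := 1 - c₂, a₂ := -b₂, a₃ := -b₂, a₄ := 0, a₆ := 0 }) :
    ∃ h : W.Nonsingular 0 0,
      addOrderOf (WeierstrassCurve.Affine.Point.some _ _ h) = 17 := by
  set t : K := ⟨β, hK ▸ IntermediateField.mem_adjoin_simple_self ℚ β⟩
  have htβ : algebraMap K ℂ t = β := rfl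
  have ht : 8 * t ^ 4 + 14 * t ^ 3 - 11 * t ^ 2 - 11 * t - 2 = 0 :=
    (algebraMap K ℂ).injective (by
      simpa only [map_sub, map_add, map_mul, map_pow, map_ofNat, map_zero, htβ] using hβ)
  have hb : b₂ = 39449 / 8192 + 91011 / 8192 * t - 41387 / 4096 * t ^ 2 - 6901 / 1024 * t ^ 3 :=
    (algebraMap K ℂ).injective (by
      simp only [map_sub, map_add, map_mul, map_div₀, map_pow, map_ofNat, htβ]
      rw [IntermediateField.algebraMap_apply, hb₂]; ring)
  have hc : c₂ = 871 / 128 + 2301 / 128 * t - 725 / 64 * t ^ 2 - 139 / 16 * t ^ 3 :=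
    (algebraMap K ℂ).injective (by
      simp only [map_sub, map_add, map_mul, map_div₀, map_pow, map_ofNat, htβ]
      rw [IntermediateField.algebraMap_apply, hc₂]; ring)
  exact hW ▸ tateNormalForm_addOrderOf_eq_seventeen ht hb hc
end
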